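/- For all real numbers a, b with 0 < a < 1 and 0 < b < 1, the principle ♣^{sup≥a} is equivalent to the principle ♣^{sup≥b}. -/

import Mathlib

open Filter Set

noncomputable def omega1 : Ordinal.{0} := (Cardinal.aleph 1).ord

/-- The set of countable limit ordinals, `Lim(ω₁)`. -/
def limOmega1 : Set Ordinal.{0} := {δ | δ < omega1 ∧ Order.IsSuccLimit δ}

/-- `C` is a closed unbounded subset of `ω₁`. -/
def IsClubIn (C : Set Ordinal.{0}) : Prop :=
  C ⊆ Set.Iio omega1 ∧
  (∀ δ, δ < omega1 → Order.IsSuccLimit δ → (∀ β < δ, ∃ γ ∈ C, β < γ ∧ γ < δ) → δ ∈ C) ∧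
  (∀ β, β < omega1 → ∃ γ ∈ C, β < γ)

/-- `S` is a stationary subset of `ω₁`. -/
def IsStatIn (S : Set Ordinal.{0}) : Prop :=
  S ⊆ Set.Iio omega1 ∧ ∀ C, IsClubIn C → (S ∩ C).Nonempty

open scoped Classical in
/-- `|{k < n : α k ∈ A}| / n` as a real number. -/
noncomputable def hitRatio (α : ℕ → Ordinal.{0}) (A : Set Ordinal.{0}) (n : ℕ) : ℝ :=
  ((Finset.range n).filter (fun k => α k ∈ A)).card / n

/-- `α` assigns to each `δ ∈ S` a strictly increasing sequence cofinal in `δ`. -/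
def GoodSeq (S : Set Ordinal.{0}) (α : Ordinal.{0} → ℕ → Ordinal.{0}) : Prop :=
  ∀ δ ∈ S, StrictMono (α δ) ∧ (∀ n, α δ n < δ) ∧ (∀ β < δ, ∃ n, β < α δ n)

/-- The principle `♣_S^{inf ≥ a}`. -/
def ClubSuitInf (S : Set Ordinal.{0}) (a : ℝ) : Prop :=
  ∃ α : Ordinal.{0} → ℕ → Ordinal.{0}, GoodSeq S α ∧
    ∀ A : Set Ordinal.{0}, A ⊆ Set.Iio omega1 → ¬ A.Countable →
      ∃ δ ∈ S, a ≤ Filter.liminf (hitRatio (α δ) A) Filter.atTop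

/-- The principle `♣_S^{sup ≥ a}`. -/
def ClubSuitSup (S : Set Ordinal.{0}) (a : ℝ) : Prop :=
  ∃ α : Ordinal.{0} → ℕ → Ordinal.{0}, GoodSeq S α ∧
    ∀ A : Set Ordinal.{0}, A ⊆ Set.Iio omega1 → ¬ A.Countable →
      ∃ δ ∈ S, a ≤ Filter.limsup (hitRatio (α δ) A) Filter.atTop

/-- The diamond principle `◊` on `ω₁`. -/
def DiamondOmega1 : Prop :=
  ∃ B : Ordinal.{0} → Set Ordinal.{0}, (∀ δ ∈ limOmega1, B δ ⊆ Set.Iio δ) ∧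
    ∀ A : Set Ordinal.{0}, A ⊆ Set.Iio omega1 →
      IsStatIn {δ ∈ limOmega1 | A ∩ Set.Iio δ = B δ}

/-!
If `♣^{sup ≥ b}` fails, every ladder system `α` admits an uncountable set whose upper density
along each `α δ` is `< b`. Given an uncountable `A ⊆ ω₁`, keep only the rungs of `α δ` that lie in
`A` and transport them to `ω₁` along the increasing enumeration of `A`; this is again a ladder
system, and pulling back the set it yields gives an uncountable `E ⊆ A` whose density along `α δ`
is at most `b` times that of `A`. Starting from `A = ω₁` and iterating `k` times, the density
drops to `b ^ k < a` along every `α δ`, so `α` does not witness `♣^{sup ≥ a}`.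
-/

open Topology

lemma countable_Iio_of_lt_omega1 {o : Ordinal.{0}} (h : o < omega1) : (Iio o).Countable := by
  rw [← Cardinal.le_aleph0_iff_set_countable, Cardinal.mk_Iio_ordinal, Cardinal.lift_le_aleph0,
    ← Cardinal.lt_aleph_one_iff, ← Cardinal.lt_ord]
  exact h

lemma iSup_lt_omega1 {f : ℕ → Ordinal.{0}} (hf : ∀ n, f n < omega1) : ⨆ n, f n < omega1 := by
  rw [omega1, Cardinal.ord_aleph] at hf ⊢
  exact Ordinal.iSup_lt_omega_one hf

lemma not_countable_Iio_omega1 : ¬(Iio omega1).Countable := by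
  rw [← Cardinal.le_aleph0_iff_set_countable, Cardinal.mk_Iio_ordinal, Cardinal.lift_le_aleph0,
    omega1, Cardinal.card_ord, not_le]
  exact Cardinal.aleph0_lt_aleph_one

def IsLadder (u : ℕ → Ordinal.{0}) (δ : Ordinal.{0}) : Prop :=
  StrictMono u ∧ (∀ n, u n < δ) ∧ ∀ β < δ, ∃ n, β < u n

namespace IsLadder

variable {u : ℕ → Ordinal.{0}} {δ : Ordinal.{0}}

lemma iSup_eq (hu : IsLadder u δ) : ⨆ n, u n = δ := by
  refine le_antisymm (Ordinal.iSup_le fun n => (hu.2.1 n).le) (le_of_forall_lt fun β hβ => ?_)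
  obtain ⟨n, hn⟩ := hu.2.2 β hβ
  exact hn.trans_le (Ordinal.le_iSup u n)

lemma of_strictMono (hu : StrictMono u) : IsLadder u (⨆ n, u n) := by
  refine ⟨hu, fun n => (hu n.lt_succ_self).trans_le (Ordinal.le_iSup u _), fun β hβ => ?_⟩
  simpa using Ordinal.lt_iSup_iff.mp hβ

lemma isSuccLimit (hu : IsLadder u δ) : Order.IsSuccLimit δ := by
  refine Ordinal.isSuccLimit_iff.mpr
    ⟨(hu.2.1 0).ne_bot, Order.isSuccPrelimit_of_succ_lt fun β hβ => ?_⟩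
  obtain ⟨n, hn⟩ := hu.2.2 β hβ
  exact (Order.succ_le_of_lt hn).trans_lt (hu.2.1 n)

lemma comp {s : ℕ → ℕ} (hu : IsLadder u δ) (hs : StrictMono s) : IsLadder (u ∘ s) δ := by
  refine ⟨hu.1.comp hs, fun n => hu.2.1 (s n), fun β hβ => ?_⟩
  obtain ⟨n, hn⟩ := hu.2.2 β hβ
  exact ⟨n, hn.trans_le (hu.1.monotone hs.le_apply)⟩

lemma iSup_comp_eq {f : Ordinal.{0} → Ordinal.{0}} (hf : Monotone f) (hu : IsLadder u δ) :
    ⨆ n, f (u n) = ⨆ β : Iio δ, f β := by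
  refine le_antisymm
    (Ordinal.iSup_le fun n => Ordinal.le_iSup (fun β : Iio δ => f β) ⟨u n, hu.2.1 n⟩)
    (Ordinal.iSup_le fun β => ?_)
  obtain ⟨n, hn⟩ := hu.2.2 β β.2
  exact (hf hn.le).trans (Ordinal.le_iSup (fun n => f (u n)) n)

end IsLadder

lemma exists_isLadder {δ : Ordinal.{0}} (hδ : δ ∈ limOmega1) : ∃ u, IsLadder u δ := by
  obtain ⟨hδω, hlim⟩ := hδ
  have : Countable (Iio δ) := (countable_Iio_of_lt_omega1 hδω).to_subtype
  have : Nonempty (Iio δ) := ⟨⟨0, hlim.bot_lt⟩⟩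
  have : NoMaxOrder (Iio δ) := ⟨fun x => ⟨⟨Order.succ x, hlim.succ_lt x.2⟩, Order.lt_succ x.1⟩⟩
  obtain ⟨x, hx⟩ := exists_seq_tendsto (atTop : Filter (Iio δ))
  obtain ⟨s, hs, hxs⟩ := strictMono_subseq_of_tendsto_atTop hx
  refine ⟨fun n => x (s n), hxs, fun n => (x (s n)).2, fun β hβ => ?_⟩
  exact ((hx.comp hs.tendsto_atTop).eventually_gt_atTop ⟨β, hβ⟩).exists

lemma Nat.count_comp_nth_count {p q : ℕ → Prop} [DecidablePred p] [DecidablePred q]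
    (hqp : ∀ k, q k → p k) (n : ℕ) :
    Nat.count (fun j => q (Nat.nth p j)) (Nat.count p n) = Nat.count q n := by
  induction n with
  | zero => simp
  | succ n ih =>
    by_cases hp : p n
    · simp [Nat.count_succ, hp, Nat.nth_count hp, ih]
    · simp [Nat.count_succ, hp, mt (hqp n) hp, ih]

open scoped Classical in
noncomputable def hitCount (u : ℕ → Ordinal.{0}) (A : Set Ordinal.{0}) (n : ℕ) : ℕ :=
  Nat.count (fun k => u k ∈ A) n

section HitRatio

open scoped Classical

variable {u v : ℕ → Ordinal.{0}} {A E : Set Ordinal.{0}}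

lemma hitRatio_eq_hitCount_div (n : ℕ) : hitRatio u A n = hitCount u A n / n := by
  rw [hitCount, Nat.count_eq_card_filter_range, hitRatio]

lemma hitCount_le (n : ℕ) : hitCount u A n ≤ n := Nat.count_le _

lemma hitRatio_nonneg (n : ℕ) : 0 ≤ hitRatio u A n := by
  rw [hitRatio_eq_hitCount_div]; positivity

lemma hitRatio_le_one (n : ℕ) : hitRatio u A n ≤ 1 := by
  rw [hitRatio_eq_hitCount_div]
  exact div_le_one_of_le₀ (mod_cast hitCount_le n) n.cast_nonneg

lemma isBoundedUnder_le_hitRatio : IsBoundedUnder (· ≤ ·) atTop (hitRatio u A) :=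
  isBoundedUnder_of ⟨1, hitRatio_le_one⟩

lemma isCoboundedUnder_le_hitRatio : IsCoboundedUnder (· ≤ ·) atTop (hitRatio u A) :=
  (isBoundedUnder_of ⟨0, hitRatio_nonneg⟩).isCoboundedUnder_le

lemma hitRatio_congr {B : Set Ordinal.{0}} (h : ∀ n, u n ∈ A ↔ v n ∈ B) :
    hitRatio u A = hitRatio v B := by
  funext n
  rw [hitRatio, hitRatio, Finset.filter_congr fun k _ => h k]

lemma exists_hitCount_le_of_limsup_lt {b : ℝ} (hb : 0 ≤ b)
    (h : limsup (hitRatio u E) atTop < b) : ∃ N : ℕ, ∀ m, (hitCount u E m : ℝ) ≤ b * m + N := by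
  obtain ⟨N, hN⟩ := eventually_atTop.1 (eventually_lt_of_limsup_lt h isBoundedUnder_le_hitRatio)
  refine ⟨N, fun m => ?_⟩
  rcases lt_or_ge m N with hm | hm
  · have : (hitCount u E m : ℝ) ≤ N := mod_cast (hitCount_le m).trans hm.le
    nlinarith [(m.cast_nonneg : (0 : ℝ) ≤ m)]
  · rcases m.eq_zero_or_pos with rfl | hm0
    · simp [hitCount]
    · have := hN m hm
      rw [hitRatio_eq_hitCount_div, div_lt_iff₀ (by exact_mod_cast hm0)] at this
      linarith [(N.cast_nonneg : (0 : ℝ) ≤ N)]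

lemma limsup_hitRatio_le_mul_of_hitCount_le {b N : ℝ} (hb : 0 ≤ b)
    (h : ∀ n, (hitCount u E n : ℝ) ≤ b * hitCount v A n + N) :
    limsup (hitRatio u E) atTop ≤ b * limsup (hitRatio v A) atTop := by
  have hratio : ∀ n, hitRatio u E n ≤ b * hitRatio v A n + N / n := fun n => by
    simp only [hitRatio_eq_hitCount_div, mul_div_assoc', ← add_div]
    exact div_le_div_of_nonneg_right (h n) n.cast_nonneg
  have hzero : Tendsto (fun n : ℕ => N / n) atTop (𝓝 0) := tendsto_const_div_atTop_nhds_zero_nat N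
  have hmul : b * limsup (hitRatio v A) atTop = limsup (fun n => b * hitRatio v A n) atTop :=
    Monotone.map_limsup_of_continuousAt (monotone_mul_left_of_nonneg hb) _
      (continuous_const_mul b).continuousAt isBoundedUnder_le_hitRatio isCoboundedUnder_le_hitRatio
  have hmul_le : IsBoundedUnder (· ≤ ·) atTop (fun n => b * hitRatio v A n) :=
    isBoundedUnder_of ⟨b, fun n => mul_le_of_le_one_right hb (hitRatio_le_one n)⟩
  have hmul_ge : IsBoundedUnder (· ≥ ·) atTop (fun n => b * hitRatio v A n) :=
    isBoundedUnder_of ⟨0, fun n => mul_nonneg hb (hitRatio_nonneg n)⟩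
  calc limsup (hitRatio u E) atTop
      ≤ limsup (fun n => b * hitRatio v A n + N / n) atTop :=
        limsup_le_limsup (Eventually.of_forall hratio) isCoboundedUnder_le_hitRatio
          (isBoundedUnder_le_add hmul_le hzero.isBoundedUnder_le)
    _ ≤ limsup (fun n => b * hitRatio v A n) atTop + limsup (fun n : ℕ => N / n) atTop :=
        limsup_add_le hmul_ge hmul_le hzero.isCoboundedUnder_le hzero.isBoundedUnder_le
    _ = b * limsup (hitRatio v A) atTop := by rw [hzero.limsup_eq, hmul, add_zero]

lemma hitCount_comp_nth_hitCount (hEA : E ⊆ A) (n : ℕ) :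
    hitCount (fun j => u (Nat.nth (fun k => u k ∈ A) j)) E (hitCount u A n) = hitCount u E n :=
  Nat.count_comp_nth_count (fun _ hk => hEA hk) n

end HitRatio

/-- The padding makes the set unbounded, so that `enumOrd` is strictly monotone everywhere; when
`A ⊆ ω₁` is uncountable, it enumerates `A` below `ω₁` (`enumPadded_mem`). -/
noncomputable def enumPadded (A : Set Ordinal.{0}) : Ordinal.{0} → Ordinal.{0} :=
  Ordinal.enumOrd (A ∪ Ici omega1)

section EnumPadded

variable {A E : Set Ordinal.{0}}

lemma not_bddAbove_union_Ici_omega1 : ¬BddAbove (A ∪ Ici omega1) :=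
  fun h => not_bddAbove_Ici omega1 (h.mono subset_union_right)

lemma enumPadded_strictMono : StrictMono (enumPadded A) :=
  Ordinal.enumOrd_strictMono not_bddAbove_union_Ici_omega1

lemma enumPadded_invFun {x : Ordinal.{0}} (hx : x ∈ A) :
    enumPadded A (Function.invFun (enumPadded A) x) = x :=
  Function.invFun_eq (Ordinal.enumOrd_surjective not_bddAbove_union_Ici_omega1 (Or.inl hx))

lemma invFun_enumPadded_lt_omega1 (hA : A ⊆ Iio omega1) {x : Ordinal.{0}} (hx : x ∈ A) :
    Function.invFun (enumPadded A) x < omega1 := by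
  calc Function.invFun (enumPadded A) x
      ≤ enumPadded A (Function.invFun (enumPadded A) x) := enumPadded_strictMono.le_apply
    _ = x := enumPadded_invFun hx
    _ < omega1 := hA hx

lemma enumPadded_mem (hA : A ⊆ Iio omega1) (hAu : ¬A.Countable) {ι : Ordinal.{0}}
    (hι : ι < omega1) :
    enumPadded A ι ∈ A := by
  refine (Ordinal.enumOrd_mem not_bddAbove_union_Ici_omega1 ι).resolve_right fun hle => hAu ?_
  refine ((countable_Iio_of_lt_omega1 hι).image (enumPadded A)).mono fun x hx => ?_
  refine ⟨_, ?_, enumPadded_invFun hx⟩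
  rw [mem_Iio, ← enumPadded_strictMono.lt_iff_lt, enumPadded_invFun hx]
  exact (hA hx).trans_le hle

lemma mem_image_enumPadded_iff {x : Ordinal.{0}} (hx : x ∈ A) :
    x ∈ enumPadded A '' E ↔ Function.invFun (enumPadded A) x ∈ E := by
  refine ⟨?_, fun h => ⟨_, h, enumPadded_invFun hx⟩⟩
  rintro ⟨ι, hι, rfl⟩
  rwa [Function.leftInverse_invFun enumPadded_strictMono.injective ι]

lemma IsLadder.exists_isLadder_invFun_enumPadded (hA : A ⊆ Iio omega1) {u : ℕ → Ordinal.{0}}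
    {δ : Ordinal.{0}} (hu : IsLadder u δ) (huA : ∀ n, u n ∈ A) :
    ∃ σ ∈ limOmega1, IsLadder (Function.invFun (enumPadded A) ∘ u) σ ∧
      ⨆ ι : Iio σ, enumPadded A ι = δ := by
  have henum : ∀ n, enumPadded A (Function.invFun (enumPadded A) (u n)) = u n :=
    fun n => enumPadded_invFun (huA n)
  have hmono : StrictMono (Function.invFun (enumPadded A) ∘ u) := fun m n hmn => by
    rw [← (enumPadded_strictMono (A := A)).lt_iff_lt, Function.comp_apply, Function.comp_apply,
      henum, henum]
    exact hu.1 hmn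
  have hladder := IsLadder.of_strictMono hmono
  refine ⟨_, ⟨iSup_lt_omega1 fun n => invFun_enumPadded_lt_omega1 hA (huA n),
    hladder.isSuccLimit⟩, hladder, ?_⟩
  refine (hladder.iSup_comp_eq enumPadded_strictMono.monotone).symm.trans ?_
  simp only [Function.comp_apply, henum]
  exact hu.iSup_eq

end EnumPadded

lemma exists_subset_limsup_hitRatio_lt {b : ℝ} (hb : ¬ClubSuitSup limOmega1 b)
    {A : Set Ordinal.{0}} (hA : A ⊆ Iio omega1) (hAu : ¬A.Countable)
    {S : Set Ordinal.{0}} {β : Ordinal.{0} → ℕ → Ordinal.{0}} (hβ : GoodSeq S β)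
    (hβA : ∀ δ ∈ S, ∀ n, β δ n ∈ A) :
    ∃ E ⊆ A, ¬E.Countable ∧ ∀ δ ∈ S, limsup (hitRatio (β δ) E) atTop < b := by
  classical
  set ψ := Function.invFun (enumPadded A)
  choose! ℓ hℓ using fun δ (hδ : δ ∈ limOmega1) => exists_isLadder hδ
  -- When `σ` comes from some `δ ∈ S`, the supremum recovers `δ`, so `β' σ` is `β δ` transported.
  let β' : Ordinal.{0} → ℕ → Ordinal.{0} := fun σ =>
    if IsLadder (ψ ∘ β (⨆ ι : Iio σ, enumPadded A ι)) σ then ψ ∘ β (⨆ ι : Iio σ, enumPadded A ι)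
    else ℓ σ
  have hβ' : GoodSeq limOmega1 β' := fun σ hσ => by
    dsimp only [β']
    split_ifs with h
    exacts [h, hℓ σ hσ]
  obtain ⟨E, hE, hEu, hEb⟩ : ∃ E ⊆ Iio omega1, ¬E.Countable ∧
      ∀ σ ∈ limOmega1, limsup (hitRatio (β' σ) E) atTop < b := by
    simp only [ClubSuitSup] at hb
    push Not at hb
    exact hb β' hβ'
  refine ⟨enumPadded A '' E, image_subset_iff.2 fun ι hι => enumPadded_mem hA hAu (hE hι),
    fun hc => hEu ((hc.preimage enumPadded_strictMono.injective).mono (subset_preimage_image _ _)),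
    fun δ hδ => ?_⟩
  obtain ⟨σ, hσ, hladder, hsup⟩ :=
    IsLadder.exists_isLadder_invFun_enumPadded hA (hβ δ hδ) (hβA δ hδ)
  have hβ'σ : β' σ = ψ ∘ β δ := by
    simp only [β', hsup]
    exact if_pos hladder
  calc limsup (hitRatio (β δ) (enumPadded A '' E)) atTop = limsup (hitRatio (β' σ) E) atTop := by
        rw [hβ'σ, hitRatio_congr fun n => mem_image_enumPadded_iff (hβA δ hδ n)]
        rfl
    _ < b := hEb σ hσ

lemma exists_subset_limsup_hitRatio_le_mul {b : ℝ} (hb : ¬ClubSuitSup limOmega1 b) (hb0 : 0 ≤ b)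
    {α : Ordinal.{0} → ℕ → Ordinal.{0}} (hα : GoodSeq limOmega1 α)
    {A : Set Ordinal.{0}} (hA : A ⊆ Iio omega1) (hAu : ¬A.Countable) :
    ∃ E ⊆ A, ¬E.Countable ∧ ∀ δ ∈ limOmega1,
      limsup (hitRatio (α δ) E) atTop ≤ b * limsup (hitRatio (α δ) A) atTop := by
  classical
  obtain ⟨E, hEA, hEu, hE⟩ := exists_subset_limsup_hitRatio_lt hb hA hAu
    (S := {δ ∈ limOmega1 | {k | α δ k ∈ A}.Infinite})
    (fun δ hδ => IsLadder.comp (hα δ hδ.1) (Nat.nth_strictMono hδ.2))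
    (fun δ hδ j => Nat.nth_mem_of_infinite hδ.2 j)
  refine ⟨E, hEA, hEu, fun δ hδ => ?_⟩
  obtain ⟨N, hN⟩ : ∃ N : ℕ, ∀ n, (hitCount (α δ) E n : ℝ) ≤ b * hitCount (α δ) A n + N := by
    by_cases hinf : {k | α δ k ∈ A}.Infinite
    · obtain ⟨N, hN⟩ := exists_hitCount_le_of_limsup_lt hb0 (hE δ ⟨hδ, hinf⟩)
      exact ⟨N, fun n => hitCount_comp_nth_hitCount hEA n ▸ hN _⟩
    · have hfin := Set.not_infinite.1 hinf
      refine ⟨hfin.toFinset.card, fun n => ?_⟩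
      have hcount : hitCount (α δ) E n ≤ hfin.toFinset.card :=
        (Nat.count_mono_left fun k _ hk => hEA hk).trans (Nat.count_le_card hfin n)
      have : (0 : ℝ) ≤ b * hitCount (α δ) A n := by positivity
      have : (hitCount (α δ) E n : ℝ) ≤ hfin.toFinset.card := mod_cast hcount
      linarith
  exact limsup_hitRatio_le_mul_of_hitCount_le hb0 hN

lemma clubSuitSup_of_clubSuitSup {a b : ℝ} (ha0 : 0 < a) (hb0 : 0 ≤ b) (hb1 : b < 1)
    (ha : ClubSuitSup limOmega1 a) : ClubSuitSup limOmega1 b := by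
  by_contra hb
  obtain ⟨α, hα, hguess⟩ := ha
  have hthin : ∀ k : ℕ, ∃ A ⊆ Iio omega1, ¬A.Countable ∧
      ∀ δ ∈ limOmega1, limsup (hitRatio (α δ) A) atTop ≤ b ^ k := by
    intro k
    induction k with
    | zero =>
      refine ⟨Iio omega1, subset_rfl, not_countable_Iio_omega1, fun δ _ => ?_⟩
      rw [pow_zero]
      exact limsup_le_of_le isCoboundedUnder_le_hitRatio (Eventually.of_forall hitRatio_le_one)
    | succ k ih =>
      obtain ⟨A, hA, hAu, hAk⟩ := ih
      obtain ⟨E, hEA, hEu, hE⟩ := exists_subset_limsup_hitRatio_le_mul hb hb0 hα hA hAu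
      refine ⟨E, hEA.trans hA, hEu, fun δ hδ => ?_⟩
      calc limsup (hitRatio (α δ) E) atTop ≤ b * limsup (hitRatio (α δ) A) atTop := hE δ hδ
        _ ≤ b * b ^ k := by gcongr; exact hAk δ hδ
        _ = b ^ (k + 1) := (pow_succ' b k).symm
  obtain ⟨k, hk⟩ := exists_pow_lt_of_lt_one ha0 hb1
  obtain ⟨A, hA, hAu, hAk⟩ := hthin k
  obtain ⟨δ, hδ, hδa⟩ := hguess A hA hAu
  exact (hk.trans_le hδa).not_ge (hAk δ hδ)

/-- For all `a, b ∈ (0,1)`, the principle `♣^{sup ≥ a}` is equivalent to `♣^{sup ≥ b}`. -/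
theorem clubSuitSup_iff (a b : ℝ) (ha0 : 0 < a) (ha1 : a < 1) (hb0 : 0 < b) (hb1 : b < 1) :
    ClubSuitSup limOmega1 a ↔ ClubSuitSup limOmega1 b :=
  ⟨clubSuitSup_of_clubSuitSup ha0 hb0.le hb1, clubSuitSup_of_clubSuitSup hb0 ha0.le ha1⟩
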